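/- Let A be a residuated lattice, F a filter of A, and C a ∨-closed subset of A. If m is an ω_F(C)-minimal prime filter of A, then m ∩ C = ∅. -/

import Mathlib

class ResiduatedLattice (α : Type*) extends Lattice α, CommMonoid α, BoundedOrder α where
  rimp : α → α → α
  one_eq_top : (1 : α) = ⊤
  adjunction : ∀ x y z : α, x * y ≤ z ↔ x ≤ rimp y z

variable {α : Type*} [ResiduatedLattice α]

/-- A filter of a residuated lattice: nonempty, closed under `⊙` and upward closed. -/
def IsFilter (F : Set α) : Prop :=
  F.Nonempty ∧ (∀ x ∈ F, ∀ y ∈ F, x * y ∈ F) ∧ ∀ x ∈ F, ∀ y : α, x ≤ y → y ∈ F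

/-- A prime filter: a proper filter such that `x ⊔ y ∈ P` implies `x ∈ P` or `y ∈ P`. -/
def IsPrimeFilter (P : Set α) : Prop :=
  IsFilter P ∧ P ≠ Set.univ ∧ ∀ x y : α, x ⊔ y ∈ P → x ∈ P ∨ y ∈ P

/-- A `∨`-closed subset: nonempty and closed under join. -/
def IsJoinClosed (C : Set α) : Prop :=
  C.Nonempty ∧ ∀ x ∈ C, ∀ y ∈ C, x ⊔ y ∈ C

/-- The filter generated by a set. -/
def filterGen (X : Set α) : Set α := ⋂₀ {G : Set α | IsFilter G ∧ X ⊆ G}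

/-- An `X`-minimal prime filter: prime, contains `X`, minimal among primes containing `X`. -/
def IsMinPrimeOver (X P : Set α) : Prop :=
  IsPrimeFilter P ∧ X ⊆ P ∧ ∀ Q : Set α, IsPrimeFilter Q → X ⊆ Q → Q ⊆ P → Q = P

/-- `ω_F(X) = {a | x ∨ a ∈ F for some x ∈ X}`. -/
def omegaF (F X : Set α) : Set α := {a : α | ∃ x ∈ X, x ⊔ a ∈ F}

/-- The coannihilator `(F : x) = {a | x ∨ a ∈ F}`. -/
def coann (F : Set α) (x : α) : Set α := {a : α | x ⊔ a ∈ F}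

/-- `D_F(H) = {a | x ∨ a ∈ F for some x ∉ H}`, the set of `F`-divisors of `H`. -/
def divisorsF (F H : Set α) : Set α := {a : α | ∃ x ∉ H, x ⊔ a ∈ F}

/-- A lattice ideal: nonempty, closed under join and downward closed. -/
def IsLatticeIdeal (I : Set α) : Prop :=
  I.Nonempty ∧ (∀ x ∈ I, ∀ y ∈ I, x ⊔ y ∈ I) ∧ ∀ x y : α, x ≤ y → y ∈ I → x ∈ I

/-- The lattice ideal generated by a set. -/
def idealGen (X : Set α) : Set α := ⋂₀ {I : Set α | IsLatticeIdeal I ∧ X ⊆ I}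

/-- An `ω_F`-filter: a filter of the form `ω_F(I)` for some lattice ideal `I`. -/
def IsOmegaFilter (F H : Set α) : Prop :=
  IsFilter H ∧ ∃ I : Set α, IsLatticeIdeal I ∧ H = omegaF F I


/-!
A prime filter `P` that is minimal over a filter `G` has, for each `x ∈ P`, some `t ∉ P` with
`x ⊔ t ∈ G`: otherwise the lattice ideal `{z | z ≤ x ⊔ t, t ∉ P}` misses `G`, and the prime
filter theorem (Zorn, with `x ⊔ y ∈ Q → x ^ n ⊔ y ^ m ∈ Q` for primality) gives a prime filter
over `G` inside `P` that avoids `x`. For `c ∈ m ∩ C` this yields `y ⊔ c ⊔ t ∈ F` with `y ∈ C` and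
`t ∉ m`; as `y ⊔ c ∈ C`, this says `t ∈ ω_F(C) ⊆ m`, a contradiction.
-/

namespace ResiduatedLattice

theorem gc_mul_rimp (y : α) : GaloisConnection (· * y) (rimp y) :=
  fun x z => adjunction x y z

instance : IsOrderedMonoid α where
  mul_le_mul_left _ _ h c := (gc_mul_rimp c).monotone_l h

theorem le_one (a : α) : a ≤ 1 :=
  one_eq_top (α := α) ▸ le_top

theorem mul_le_left (a b : α) : a * b ≤ a :=
  mul_le_of_le_one_right' (le_one b)

theorem mul_le_right (a b : α) : a * b ≤ b :=
  mul_le_of_le_one_left' (le_one a)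

protected theorem sup_mul (a b c : α) : (a ⊔ b) * c = a * c ⊔ b * c :=
  (gc_mul_rimp c).l_sup

protected theorem mul_sup (a b c : α) : a * (b ⊔ c) = a * b ⊔ a * c := by
  simp only [mul_comm a, ResiduatedLattice.sup_mul]

theorem sup_mul_sup_le (a b c : α) : (a ⊔ b) * (a ⊔ c) ≤ a ⊔ b * c := by
  rw [ResiduatedLattice.sup_mul, ResiduatedLattice.mul_sup, ResiduatedLattice.mul_sup]
  exact sup_le (sup_le ((mul_le_left a a).trans le_sup_left) ((mul_le_left a c).trans le_sup_left))
    (sup_le_sup_right (mul_le_right b a) _)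

end ResiduatedLattice

open ResiduatedLattice

namespace IsFilter

variable {F : Set α}

theorem one_mem (hF : IsFilter F) : (1 : α) ∈ F := by
  obtain ⟨⟨f, hf⟩, -, hup⟩ := hF
  exact hup f hf 1 (le_one f)

theorem sup_pow_mem (hF : IsFilter F) {a b : α} (hab : a ⊔ b ∈ F) (n : ℕ) :
    a ⊔ b ^ n ∈ F := by
  induction n with
  | zero =>
    rw [pow_zero]
    exact hF.2.2 _ hab _ (sup_le_sup_left (le_one b) a)
  | succ n ih =>
    rw [pow_succ]
    exact hF.2.2 _ (hF.2.1 _ ih _ hab) _ (sup_mul_sup_le a _ b)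

theorem pow_sup_pow_mem (hF : IsFilter F) {a b : α} (hab : a ⊔ b ∈ F) (n m : ℕ) :
    a ^ n ⊔ b ^ m ∈ F := by
  have hbn : b ⊔ a ^ n ∈ F := hF.sup_pow_mem (sup_comm a b ▸ hab) n
  simpa only [sup_comm] using hF.sup_pow_mem (sup_comm b (a ^ n) ▸ hbn) m

end IsFilter

theorem isFilter_sUnion {c : Set (Set α)} (hc : ∀ Q ∈ c, IsFilter Q)
    (hchain : IsChain (· ⊆ ·) c) (hne : c.Nonempty) : IsFilter (⋃₀ c) := by
  obtain ⟨Q₀, hQ₀⟩ := hne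
  refine ⟨(hc Q₀ hQ₀).1.mono (Set.subset_sUnion_of_mem hQ₀), ?_, ?_⟩
  · rintro x ⟨Qx, hQx, hx⟩ y ⟨Qy, hQy, hy⟩
    rcases hchain.total hQx hQy with h | h
    · exact ⟨Qy, hQy, (hc Qy hQy).2.1 x (h hx) y hy⟩
    · exact ⟨Qx, hQx, (hc Qx hQx).2.1 x hx y (h hy)⟩
  · rintro x ⟨Qx, hQx, hx⟩ y hxy
    exact ⟨Qx, hQx, (hc Qx hQx).2.2 x hx y hxy⟩

/-- The filter generated by `Q ∪ {z}`, for a filter `Q`. -/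
def filterAdjoin (Q : Set α) (z : α) : Set α :=
  {w | ∃ q ∈ Q, ∃ n : ℕ, q * z ^ n ≤ w}

section filterAdjoin

variable {Q : Set α}

theorem IsFilter.isFilter_filterAdjoin (hQ : IsFilter Q) (z : α) :
    IsFilter (filterAdjoin Q z) := by
  refine ⟨hQ.1.mono fun q hq => ⟨q, hq, 0, by simp⟩, ?_, ?_⟩
  · rintro a ⟨q, hq, n, hn⟩ b ⟨q', hq', n', hn'⟩
    refine ⟨q * q', hQ.2.1 _ hq _ hq', n + n', ?_⟩
    rw [pow_add, mul_mul_mul_comm]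
    exact mul_le_mul' hn hn'
  · rintro a ⟨q, hq, n, hn⟩ b hab
    exact ⟨q, hq, n, hn.trans hab⟩

theorem subset_filterAdjoin (z : α) : Q ⊆ filterAdjoin Q z :=
  fun q hq => ⟨q, hq, 0, by simp⟩

theorem IsFilter.mem_filterAdjoin (hQ : IsFilter Q) (z : α) : z ∈ filterAdjoin Q z := by
  obtain ⟨q, hq⟩ := hQ.1
  exact ⟨q, hq, 1, by simpa using mul_le_right q z⟩

end filterAdjoin

section PrimeFilterTheorem

variable {G J Q : Set α}

theorem exists_maximal_isFilter_disjoint (hG : IsFilter G) (hGJ : Disjoint G J) :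
    ∃ Q, G ⊆ Q ∧ Maximal (fun Q => IsFilter Q ∧ Disjoint Q J) Q := by
  refine zorn_subset_nonempty _ (fun c hcS hchain hne => ?_) G ⟨hG, hGJ⟩
  refine ⟨⋃₀ c, ⟨?_, ?_⟩, fun _ => Set.subset_sUnion_of_mem⟩
  · exact isFilter_sUnion (fun Q hQ => (hcS hQ).1) hchain hne
  · exact Set.disjoint_sUnion_left.2 fun Q hQ => (hcS hQ).2

theorem exists_mul_pow_le_of_maximal (hQ : Maximal (fun Q => IsFilter Q ∧ Disjoint Q J) Q)
    {z : α} (hz : z ∉ Q) : ∃ q ∈ Q, ∃ n : ℕ, ∃ j ∈ J, q * z ^ n ≤ j := by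
  have hQz : ¬ Disjoint (filterAdjoin Q z) J := fun hdisj =>
    hz (hQ.2 ⟨hQ.1.1.isFilter_filterAdjoin z, hdisj⟩ (subset_filterAdjoin z)
      (hQ.1.1.mem_filterAdjoin z))
  obtain ⟨j, ⟨q, hq, n, hle⟩, hj⟩ := Set.not_disjoint_iff.1 hQz
  exact ⟨q, hq, n, j, hj, hle⟩

theorem isPrimeFilter_of_maximal (hJ : IsJoinClosed J)
    (hQ : Maximal (fun Q => IsFilter Q ∧ Disjoint Q J) Q) : IsPrimeFilter Q := by
  obtain ⟨hQF, hQJ⟩ := hQ.1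
  refine ⟨hQF, fun h => ?_, fun x y hxy => ?_⟩
  · obtain ⟨j, hj⟩ := hJ.1
    exact Set.disjoint_left.1 hQJ (h ▸ Set.mem_univ j) hj
  by_contra! hxy'
  obtain ⟨qx, hqx, n, jx, hjx, hx⟩ := exists_mul_pow_le_of_maximal hQ hxy'.1
  obtain ⟨qy, hqy, m, jy, hjy, hy⟩ := exists_mul_pow_le_of_maximal hQ hxy'.2
  have hle : qx * qy * (x ^ n ⊔ y ^ m) ≤ jx ⊔ jy := by
    rw [ResiduatedLattice.mul_sup]
    exact sup_le_sup ((mul_le_mul_left (mul_le_left qx qy) _).trans hx)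
      ((mul_le_mul_left (mul_le_right qx qy) _).trans hy)
  have hmem : qx * qy * (x ^ n ⊔ y ^ m) ∈ Q :=
    hQF.2.1 _ (hQF.2.1 _ hqx _ hqy) _ (hQF.pow_sup_pow_mem hxy n m)
  exact Set.disjoint_left.1 hQJ (hQF.2.2 _ hmem _ hle) (hJ.2 _ hjx _ hjy)

theorem exists_isPrimeFilter_disjoint (hG : IsFilter G) (hJ : IsJoinClosed J)
    (hGJ : Disjoint G J) : ∃ Q, IsPrimeFilter Q ∧ G ⊆ Q ∧ Disjoint Q J := by
  obtain ⟨Q, hGQ, hQ⟩ := exists_maximal_isFilter_disjoint hG hGJ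
  exact ⟨Q, isPrimeFilter_of_maximal hJ hQ, hGQ, hQ.1.2⟩

end PrimeFilterTheorem

theorem IsMinPrimeOver.exists_notMem_sup_mem {G P : Set α} (hG : IsFilter G)
    (hP : IsMinPrimeOver G P) {x : α} (hx : x ∈ P) : ∃ t ∉ P, x ⊔ t ∈ G := by
  obtain ⟨hPprime, -, hmin⟩ := hP
  by_contra! hsup
  set J : Set α := {z | ∃ t ∉ P, z ≤ x ⊔ t}
  obtain ⟨t₀, ht₀⟩ : ∃ t, t ∉ P := by
    by_contra! h
    exact hPprime.2.1 (Set.eq_univ_of_forall h)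
  have hJ : IsJoinClosed J := by
    refine ⟨⟨x ⊔ t₀, t₀, ht₀, le_rfl⟩, ?_⟩
    rintro a ⟨t, ht, hat⟩ b ⟨s, hs, hbs⟩
    refine ⟨t ⊔ s, fun hts => (hPprime.2.2 t s hts).elim ht hs, sup_le ?_ ?_⟩
    · exact hat.trans (sup_le_sup_left le_sup_left x)
    · exact hbs.trans (sup_le_sup_left le_sup_right x)
  have hGJ : Disjoint G J := Set.disjoint_right.2 fun z ⟨t, ht, hzt⟩ hzG =>
    hsup t ht (hG.2.2 z hzG _ hzt)
  obtain ⟨Q, hQ, hGQ, hQJ⟩ := exists_isPrimeFilter_disjoint hG hJ hGJ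
  have hQP : Q ⊆ P := fun q hq => by
    by_contra hqP
    exact Set.disjoint_left.1 hQJ hq ⟨q, hqP, le_sup_right⟩
  have hxJ : x ∈ J := ⟨t₀, ht₀, le_sup_left⟩
  exact Set.disjoint_left.1 hQJ (hmin Q hQ hGQ hQP ▸ hx) hxJ

theorem isFilter_omegaF {F C : Set α} (hF : IsFilter F) (hC : IsJoinClosed C) :
    IsFilter (omegaF F C) := by
  obtain ⟨c, hc⟩ := hC.1
  refine ⟨⟨1, c, hc, hF.2.2 _ hF.one_mem _ (le_one _ |>.trans le_sup_right)⟩, ?_, ?_⟩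
  · rintro a ⟨x, hx, hxa⟩ b ⟨y, hy, hyb⟩
    refine ⟨x ⊔ y, hC.2 x hx y hy, hF.2.2 _ (hF.2.1 _ hxa _ hyb) _ ?_⟩
    calc (x ⊔ a) * (y ⊔ b) ≤ (x ⊔ y ⊔ a) * (x ⊔ y ⊔ b) :=
          mul_le_mul' (sup_le_sup_right le_sup_left a) (sup_le_sup_right le_sup_right b)
      _ ≤ x ⊔ y ⊔ a * b := sup_mul_sup_le _ _ _
  · rintro a ⟨x, hx, hxa⟩ b hab
    exact ⟨x, hx, hF.2.2 _ hxa _ (sup_le_sup_left hab x)⟩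

/-- Proposition 3.16: if `m` is an `ω_F(C)`-minimal prime filter, then
`m ∩ C = ∅`. -/
theorem stmt_11 (F C m : Set α) (hF : IsFilter F) (hC : IsJoinClosed C)
    (hm : IsMinPrimeOver (omegaF F C) m) :
    m ∩ C = ∅ := by
  refine Set.eq_empty_of_forall_notMem fun c ⟨hcm, hcC⟩ => ?_
  obtain ⟨t, htm, y, hyC, hyct⟩ := hm.exists_notMem_sup_mem (isFilter_omegaF hF hC) hcm
  exact htm (hm.2.1 ⟨y ⊔ c, hC.2 y hyC c hcC, by rwa [sup_assoc]⟩)
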